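/- The Friedkin–Johnsen dynamics contract polarization: for any weighted undirected graph with Laplacian L and any innate opinions s ∈ ℝⁿ, the expressed opinions z = (I+L)^{-1}·s satisfy P(z) ≤ P(s). -/

import Mathlib

open Matrix Finset

noncomputable def deg {n : ℕ} (W : Matrix (Fin n) (Fin n) ℝ) (i : Fin n) : ℝ := ∑ j, W i j

noncomputable def lap {n : ℕ} (W : Matrix (Fin n) (Fin n) ℝ) : Matrix (Fin n) (Fin n) ℝ :=
  Matrix.diagonal (deg W) - W

noncomputable def mean {n : ℕ} (x : Fin n → ℝ) : ℝ := (∑ i, x i) / n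

noncomputable def ctr {n : ℕ} (x : Fin n → ℝ) : Fin n → ℝ := fun i => x i - mean x

noncomputable def pol {n : ℕ} (x : Fin n → ℝ) : ℝ := ∑ i, (x i - mean x) ^ 2

def vij {n : ℕ} (i j : Fin n) : Fin n → ℝ :=
  fun k => (if k = i then (1 : ℝ) else 0) - (if k = j then (1 : ℝ) else 0)

/-!
Write `L` for the Laplacian. Since `L` is positive semidefinite, `‖u‖² ≤ ‖u + L u‖²` for every
`u`. Take `u = z - c·1` with `c` the mean of `s`: as `L 1 = 0`, `u + L u = s - c·1`, so
`‖u‖² ≤ P(s)`; and `P(z) ≤ ‖z - c·1‖²` because the mean minimizes the sum of squared deviations.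
-/

lemma sum_eq_card_mul_mean {n : ℕ} (x : Fin n → ℝ) : ∑ i, x i = n * mean x := by
  rcases Nat.eq_zero_or_pos n with rfl | hn
  · simp
  · rw [mean, mul_div_cancel₀ _ (by positivity)]

lemma pol_le_sum_sq_sub {n : ℕ} (x : Fin n → ℝ) (c : ℝ) : pol x ≤ ∑ i, (x i - c) ^ 2 := by
  have hsplit : ∑ i, (x i - c) ^ 2 = pol x + n * (mean x - c) ^ 2 := by
    have hx := sum_eq_card_mul_mean x
    simp only [pol, sub_sq, sum_add_distrib, sum_sub_distrib, ← sum_mul, ← mul_sum, sum_const,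
      card_univ, Fintype.card_fin, nsmul_eq_mul, hx]
    ring
  rw [hsplit]
  exact le_add_of_nonneg_right (by positivity)

lemma lap_mulVec_apply {n : ℕ} (W : Matrix (Fin n) (Fin n) ℝ) (x : Fin n → ℝ) (i : Fin n) :
    (lap W *ᵥ x) i = ∑ j, W i j * (x i - x j) := by
  rw [lap, sub_mulVec, Pi.sub_apply, mulVec_diagonal, deg, sum_mul]
  simp only [mulVec, dotProduct, mul_sub, sum_sub_distrib]

lemma lap_mulVec_const {n : ℕ} (W : Matrix (Fin n) (Fin n) ℝ) (c : ℝ) :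
    lap W *ᵥ (fun _ => c) = 0 := by
  ext i
  simp [lap_mulVec_apply]

lemma two_mul_dotProduct_lap_mulVec {n : ℕ} {W : Matrix (Fin n) (Fin n) ℝ} (hW : W.IsSymm)
    (x : Fin n → ℝ) :
    2 * (x ⬝ᵥ (lap W *ᵥ x)) = ∑ i, ∑ j, W i j * (x i - x j) ^ 2 := by
  have hform : x ⬝ᵥ (lap W *ᵥ x) = ∑ i, ∑ j, W i j * x i * (x i - x j) := by
    simp only [dotProduct, lap_mulVec_apply, mul_sum]
    exact sum_congr rfl fun i _ => sum_congr rfl fun j _ => by ring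
  have hswap : ∑ i, ∑ j, W i j * x i * (x i - x j) = ∑ i, ∑ j, W i j * x j * (x j - x i) := by
    rw [sum_comm]
    exact sum_congr rfl fun i _ => sum_congr rfl fun j _ => by rw [hW.apply i j]
  rw [two_mul]
  nth_rw 1 [hform]
  rw [hform.trans hswap, ← sum_add_distrib]
  exact sum_congr rfl fun i _ => by rw [← sum_add_distrib]; exact sum_congr rfl fun j _ => by ring

lemma lap_posSemidef {n : ℕ} {W : Matrix (Fin n) (Fin n) ℝ} (hW : W.IsSymm)
    (hW_nonneg : ∀ i j, 0 ≤ W i j) : (lap W).PosSemidef := by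
  refine .of_dotProduct_mulVec_nonneg ?_ fun x => ?_
  · rw [isHermitian_iff_isSymm]
    exact (isSymm_diagonal _).sub hW
  · have hform := two_mul_dotProduct_lap_mulVec hW x
    have hsum : 0 ≤ ∑ i, ∑ j, W i j * (x i - x j) ^ 2 :=
      sum_nonneg fun i _ => sum_nonneg fun j _ => mul_nonneg (hW_nonneg i j) (sq_nonneg _)
    simp only [star_trivial]
    linarith

lemma dotProduct_self_le_of_posSemidef {ι : Type*} [Fintype ι] {L : Matrix ι ι ℝ}
    (hL : L.PosSemidef) (u : ι → ℝ) : u ⬝ᵥ u ≤ (u + L *ᵥ u) ⬝ᵥ (u + L *ᵥ u) := by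
  have hq : 0 ≤ u ⬝ᵥ (L *ᵥ u) := by simpa using hL.dotProduct_mulVec_nonneg u
  have hsq : 0 ≤ (L *ᵥ u) ⬝ᵥ (L *ᵥ u) := by simpa using dotProduct_star_self_nonneg (L *ᵥ u)
  simp only [add_dotProduct, dotProduct_add, dotProduct_comm (L *ᵥ u) u]
  linarith

theorem stmt_16_general {n : ℕ} (wbar : ℝ)
    (W : Matrix (Fin n) (Fin n) ℝ)
    (hsymm : W.IsSymm)
    (hW : ∀ i j, 0 ≤ W i j ∧ W i j ≤ wbar)
    (s : Fin n → ℝ)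
    (z : Fin n → ℝ) (hz : z = (1 + lap W)⁻¹ *ᵥ s) :
    pol z ≤ pol s := by
  have hL := lap_posSemidef hsymm fun i j => (hW i j).1
  have hA : IsUnit (1 + lap W).det :=
    (isUnit_iff_isUnit_det _).mp (PosDef.one.add_posSemidef hL).isUnit
  have hs : (1 + lap W) *ᵥ z = s := by
    rw [hz, mulVec_mulVec, mul_nonsing_inv _ hA, one_mulVec]
  set c := mean s
  set u : Fin n → ℝ := z - fun _ => c
  have hu : u + lap W *ᵥ u = s - fun _ => c := by
    rw [mulVec_sub, lap_mulVec_const, sub_zero, ← hs, add_mulVec, one_mulVec]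
    simp only [u]
    abel
  calc pol z ≤ u ⬝ᵥ u := by simpa [dotProduct, sq, u] using pol_le_sum_sq_sub z c
    _ ≤ (u + lap W *ᵥ u) ⬝ᵥ (u + lap W *ᵥ u) := dotProduct_self_le_of_posSemidef hL u
    _ = pol s := by rw [hu]; simp [dotProduct, pol, sq, c]

/-- the Friedkin–Johnsen dynamics contract polarization:
`P(z) ≤ P(s)` where `z = (I+L)⁻¹ s`. -/
theorem stmt_16 {n : ℕ} (hn : 2 ≤ n) (wbar : ℝ) (hwbar : 0 < wbar)
    (W : Matrix (Fin n) (Fin n) ℝ)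
    (hsymm : W.IsSymm) (hdiag : ∀ i, W i i = 0)
    (hW : ∀ i j, 0 ≤ W i j ∧ W i j ≤ wbar)
    (s : Fin n → ℝ)
    (z : Fin n → ℝ) (hz : z = (1 + lap W)⁻¹ *ᵥ s) :
    pol z ≤ pol s :=
  stmt_16_general wbar W hsymm hW s z hz
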